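/- For binary potential outcomes satisfying 0 ≤ N₀₁ ≤ N·p₀·(1−p₁), the variance of τ̂(T) = n₁₁(T)/N₁ − n₀₁(T)/N₀ is bounded as (N/(N−1))·{ (N₀/N)·p₁(1−p₁)/N₁ + (N₁/N)·p₀(1−p₀)/N₀ } ≤ var(τ̂) ≤ (N/(N−1))·{ p₁(1−p₁)/N₁ + p₀(1−p₀)/N₀ − τ(1−τ)/N }, where the variance is over the uniform distribution on subsets T of size N₁. -/

import Mathlib

/-- Expectation of a real-valued statistic `f` of the treatment group `T`,
where `T` is a uniformly random subset of `{1,…,N}` of size `N₁`. -/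
noncomputable def expE (N N₁ : ℕ) (f : Finset (Fin N) → ℝ) : ℝ :=
  (∑ T ∈ Finset.powersetCard N₁ (Finset.univ : Finset (Fin N)), f T) /
    ((Finset.powersetCard N₁ (Finset.univ : Finset (Fin N))).card : ℝ)

/-- Variance of a real-valued statistic `f` over uniformly random subsets of size `N₁`. -/
noncomputable def varE (N N₁ : ℕ) (f : Finset (Fin N) → ℝ) : ℝ :=
  expE N N₁ (fun T => (f T - expE N N₁ f) ^ 2)

/-!
Writing `cᵢ = Y₁(i)/N₁ + Y₀(i)/N₀`, the estimator is `∑_{i ∈ T} cᵢ - ∑ᵢ Y₀(i)/N₀`, a sample total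
minus a constant. Counting the `N₁`-subsets that contain one or two given units gives the variance
of a sample total under sampling without replacement,
`N₁ N₀ / (N² (N - 1)) · (N ∑ cᵢ² - (∑ cᵢ)²)`. For binary outcomes this is Neyman's formula
`var τ̂ = N/(N-1) · {(N₀/N) p₁(1-p₁)/N₁ + (N₁/N) p₀(1-p₀)/N₀ + 2 (N₁₁/N - p₁ p₀)/N}`.
The hypothesis on `N₀₁` says exactly that the covariance term `N₁₁/N - p₁ p₀` is nonnegative,
which gives the lower bound, and the upper bound exceeds the variance by `2 N₀₁ / (N (N - 1))`.
-/

open Finset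

theorem card_filter_powersetCard_superset_mul_choose {α : Type*} [DecidableEq α]
    {s t : Finset α} (hst : s ⊆ t) (n : ℕ) :
    #{T ∈ t.powersetCard n | s ⊆ T} * (#t).choose #s = (#t).choose n * n.choose #s := by
  obtain hsn | hns := le_or_gt #s n
  · rw [card_filter_powersetCard_subset s t n hst hsn, Nat.choose_mul hsn, mul_comm]
  · have hempty : {T ∈ t.powersetCard n | s ⊆ T} = ∅ := by
      refine filter_false_of_mem fun T hT hsT => ?_
      have := card_le_card hsT
      rw [(mem_powersetCard.1 hT).2] at this
      omega
    simp [hempty, Nat.choose_eq_zero_of_lt hns]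

theorem sum_sum_eq_sum_card_filter_smul {α β M : Type*} [Fintype α] [DecidableEq α]
    [AddCommMonoid M] (𝒜 : Finset β) (F : β → Finset α) (g : α → M) :
    ∑ T ∈ 𝒜, ∑ x ∈ F T, g x = ∑ x, #{T ∈ 𝒜 | x ∈ F T} • g x := by
  rw [sum_comm' (t' := univ) (s' := fun x => {T ∈ 𝒜 | x ∈ F T})]
  · simp only [sum_const]
  · simp

section SimpleRandomSampling

variable {ι : Type*} [Fintype ι] [DecidableEq ι] (n : ℕ)

theorem card_filter_mem_powersetCard_mul (i : ι) :
    (#{T ∈ powersetCard n univ | i ∈ T} : ℝ) * Fintype.card ι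
      = (Fintype.card ι).choose n * n := by
  have h := card_filter_powersetCard_superset_mul_choose (subset_univ {i}) n
  simp only [singleton_subset_iff, card_singleton, Nat.choose_one_right, card_univ] at h
  exact_mod_cast h

theorem card_filter_mem_mem_powersetCard_mul (i j : ι) :
    (#{T ∈ powersetCard n univ | i ∈ T ∧ j ∈ T} : ℝ) * (Fintype.card ι * (Fintype.card ι - 1))
      = (Fintype.card ι).choose n
          * (n * (n - 1) + if i = j then (n * (Fintype.card ι - n) : ℝ) else 0) := by
  obtain rfl | hij := eq_or_ne i j
  · simp only [and_self, if_true]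
    linear_combination (Fintype.card ι - 1 : ℝ) * card_filter_mem_powersetCard_mul n i
  · have h := card_filter_powersetCard_superset_mul_choose (subset_univ {i, j}) n
    simp only [insert_subset_iff, singleton_subset_iff, card_pair hij, card_univ] at h
    have hR : (#{T ∈ powersetCard n univ | i ∈ T ∧ j ∈ T} : ℝ)
        * ((Fintype.card ι).choose 2 : ℕ) = ((Fintype.card ι).choose n : ℕ) * (n.choose 2 : ℕ) := by
      exact_mod_cast h
    rw [Nat.cast_choose_two, Nat.cast_choose_two] at hR
    rw [if_neg hij]
    linear_combination 2 * hR

theorem sum_powersetCard_sum_mul (c : ι → ℝ) :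
    (∑ T ∈ powersetCard n univ, ∑ i ∈ T, c i) * Fintype.card ι
      = (Fintype.card ι).choose n * n * ∑ i, c i := by
  rw [sum_sum_eq_sum_card_filter_smul, sum_mul, mul_sum]
  refine sum_congr rfl fun i _ => ?_
  rw [nsmul_eq_mul]
  linear_combination c i * card_filter_mem_powersetCard_mul n i

theorem sum_powersetCard_sq_sum_mul (c : ι → ℝ) :
    (∑ T ∈ powersetCard n univ, (∑ i ∈ T, c i) ^ 2) * (Fintype.card ι * (Fintype.card ι - 1))
      = (Fintype.card ι).choose n
          * (n * (Fintype.card ι - n) * ∑ i, c i ^ 2 + n * (n - 1) * (∑ i, c i) ^ 2) := by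
  have hsq : ∀ T : Finset ι, (∑ i ∈ T, c i) ^ 2 = ∑ x ∈ T ×ˢ T, c x.1 * c x.2 := fun T => by
    rw [sq, sum_mul_sum, sum_product]
  rw [sum_congr rfl fun T _ => hsq T, sum_sum_eq_sum_card_filter_smul, Fintype.sum_prod_type,
    sum_mul]
  simp only [mem_product, nsmul_eq_mul, sum_mul]
  calc _ = ∑ i, ∑ j, (Fintype.card ι).choose n * ((n * (n - 1) * (c i * c j))
              + (if i = j then (n * (Fintype.card ι - n) : ℝ) else 0) * (c i * c j)) :=
        sum_congr rfl fun i _ => sum_congr rfl fun j _ => by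
          linear_combination c i * c j * card_filter_mem_mem_powersetCard_mul n i j
    _ = _ := by
        simp only [mul_add, sum_add_distrib, ite_mul, zero_mul, sum_ite_eq, mem_univ, if_true,
          ← mul_sum, ← sum_mul, sq]
        ring

end SimpleRandomSampling

section UniformSubset

variable {N n : ℕ}

theorem varE_eq_expE_sq_sub (f : Finset (Fin N) → ℝ) :
    varE N n f = expE N n (fun T => f T ^ 2) - expE N n f ^ 2 := by
  unfold varE expE
  obtain hC | hC := eq_or_ne (#(powersetCard n (univ : Finset (Fin N))) : ℝ) 0
  · simp only [hC, div_zero]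
    ring
  simp only [sub_sq, sum_add_distrib, sum_sub_distrib, ← sum_mul, ← mul_sum, sum_const,
    nsmul_eq_mul]
  field_simp
  ring

theorem expE_sub_const (hn : n ≤ N) (f : Finset (Fin N) → ℝ) (K : ℝ) :
    expE N n (fun T => f T - K) = expE N n f - K := by
  have hC : (#(powersetCard n (univ : Finset (Fin N))) : ℝ) ≠ 0 := by
    simpa using Nat.choose_ne_zero hn
  unfold expE
  rw [sum_sub_distrib, sum_const, nsmul_eq_mul, sub_div, mul_div_cancel_left₀ K hC]

theorem varE_sub_const (hn : n ≤ N) (f : Finset (Fin N) → ℝ) (K : ℝ) :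
    varE N n (fun T => f T - K) = varE N n f := by
  simp only [varE, expE_sub_const hn, sub_sub_sub_cancel_right]

theorem varE_sum_mul (hn : n ≤ N) (c : Fin N → ℝ) :
    varE N n (fun T => ∑ i ∈ T, c i) * (N ^ 2 * (N - 1))
      = n * (N - n) * (N * ∑ i, c i ^ 2 - (∑ i, c i) ^ 2) := by
  have hC : (N.choose n : ℝ) ≠ 0 := by exact_mod_cast Nat.choose_ne_zero hn
  have h1 := sum_powersetCard_sum_mul n c
  have h2 := sum_powersetCard_sq_sum_mul n c
  simp only [Fintype.card_fin] at h1 h2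
  set A := ∑ T ∈ powersetCard n univ, ∑ i ∈ T, c i
  set B := ∑ T ∈ powersetCard n univ, (∑ i ∈ T, c i) ^ 2
  calc _ = N * (B * (N * (N - 1))) / N.choose n - (N - 1) * (A * N) ^ 2 / N.choose n ^ 2 := by
        rw [varE_eq_expE_sq_sub]
        simp only [expE, card_powersetCard, card_univ, Fintype.card_fin]
        ring
    _ = _ := by
        rw [h1, h2]
        field_simp
        ring

end UniformSubset

theorem diffInMeans_eq_sum_sub {ι : Type*} [Fintype ι] [DecidableEq ι] (y1 y0 : ι → ℝ)
    (a b : ℝ) (T : Finset ι) :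
    (∑ i ∈ T, y1 i) / a - (∑ i ∈ Tᶜ, y0 i) / b
      = ∑ i ∈ T, (y1 i / a + y0 i / b) - (∑ i, y0 i) / b := by
  rw [← sum_add_sum_compl T y0, sum_add_distrib, ← sum_div, ← sum_div]
  ring

theorem varE_diffInMeans_mul {N N₁ N₀ : ℕ} (hN : N₁ + N₀ = N) (hN₁ : 0 < N₁) (hN₀ : 0 < N₀)
    (y1 y0 : Fin N → ℝ) :
    varE N N₁ (fun T => (∑ i ∈ T, y1 i) / N₁ - (∑ i ∈ Tᶜ, y0 i) / N₀) * (N * (N - 1))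
      = N₀ / N₁ * (∑ i, y1 i ^ 2 - (∑ i, y1 i) ^ 2 / N)
        + N₁ / N₀ * (∑ i, y0 i ^ 2 - (∑ i, y0 i) ^ 2 / N)
        + 2 * (∑ i, y1 i * y0 i - (∑ i, y1 i) * (∑ i, y0 i) / N) := by
  have hN₁' : (N₁ : ℝ) ≠ 0 := by positivity
  have hN₀' : (N₀ : ℝ) ≠ 0 := by positivity
  have hNR : (N : ℝ) = N₁ + N₀ := by exact_mod_cast hN.symm
  have hN' : (N : ℝ) ≠ 0 := by rw [hNR]; positivity
  simp only [diffInMeans_eq_sum_sub]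
  rw [varE_sub_const (by omega)]
  have h := varE_sum_mul (n := N₁) (by omega) fun i => y1 i / N₁ + y0 i / N₀
  have hsum : ∑ i, (y1 i / N₁ + y0 i / N₀) = (∑ i, y1 i) / N₁ + (∑ i, y0 i) / N₀ := by
    rw [sum_add_distrib, sum_div, sum_div]
  have hsq : ∑ i, (y1 i / N₁ + y0 i / N₀) ^ 2
      = (∑ i, y1 i ^ 2) / N₁ ^ 2 + 2 * (∑ i, y1 i * y0 i) / (N₁ * N₀)
        + (∑ i, y0 i ^ 2) / N₀ ^ 2 := by
    have hterm : ∀ i, (y1 i / N₁ + y0 i / N₀) ^ 2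
        = y1 i ^ 2 / N₁ ^ 2 + 2 * (y1 i * y0 i) / (N₁ * N₀) + y0 i ^ 2 / N₀ ^ 2 := fun i => by ring
    simp only [hterm, sum_add_distrib, ← sum_div, ← mul_sum]
  rw [hsum, hsq] at h
  set V := varE N N₁ fun T => ∑ i ∈ T, (y1 i / N₁ + y0 i / N₀)
  apply mul_right_cancel₀ hN'
  rw [show V * (N * (N - 1)) * N = V * (N ^ 2 * (N - 1)) by ring, h, hNR]
  field_simp
  ring

theorem card_filter_eq_one_eq_sum {ι : Type*} {g : ι → ℕ} (hg : ∀ i, g i ≤ 1) (s : Finset ι) :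
    #{i ∈ s | g i = 1} = ∑ i ∈ s, g i := by
  rw [card_filter]
  exact sum_congr rfl fun i _ => by have := hg i; split_ifs <;> omega

theorem sum_eq_card_filter_smul_of_le_one {ι M : Type*} [Fintype ι] [AddCommMonoid M] {a b : ι → ℕ}
    (ha : ∀ i, a i ≤ 1) (hb : ∀ i, b i ≤ 1) (F : ℕ → ℕ → M) :
    ∑ i, F (a i) (b i)
      = #{i | a i = 1 ∧ b i = 1} • F 1 1 + #{i | a i = 1 ∧ b i = 0} • F 1 0
        + #{i | a i = 0 ∧ b i = 1} • F 0 1 + #{i | a i = 0 ∧ b i = 0} • F 0 0 := by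
  have hcell : ∀ i, F (a i) (b i)
      = (if a i = 1 ∧ b i = 1 then F 1 1 else 0) + (if a i = 1 ∧ b i = 0 then F 1 0 else 0)
        + (if a i = 0 ∧ b i = 1 then F 0 1 else 0) + (if a i = 0 ∧ b i = 0 then F 0 0 else 0) := by
    intro i
    obtain ha | ha : a i = 0 ∨ a i = 1 := by have := ha i; omega
    all_goals obtain hb | hb : b i = 0 ∨ b i = 1 := by have := hb i; omega
    all_goals simp [ha, hb]
  simp only [hcell, sum_add_distrib, ← sum_filter, sum_const]

theorem varE_diffInMeans_of_le_one {N N₁ N₀ : ℕ} (hN : N₁ + N₀ = N) (hN₁ : 0 < N₁)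
    (hN₀ : 0 < N₀) {Y1 Y0 : Fin N → ℕ} (hY1 : ∀ i, Y1 i ≤ 1) (hY0 : ∀ i, Y0 i ≤ 1)
    {x11 x10 x01 : ℕ} (h11 : #{i | Y1 i = 1 ∧ Y0 i = 1} = x11)
    (h10 : #{i | Y1 i = 1 ∧ Y0 i = 0} = x10) (h01 : #{i | Y1 i = 0 ∧ Y0 i = 1} = x01) :
    varE N N₁ (fun T => (#{i ∈ T | Y1 i = 1} : ℝ) / N₁ - (#{i ∈ Tᶜ | Y0 i = 1} : ℝ) / N₀)
        * (N * (N - 1))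
      = N₀ / N₁ * ((x11 + x10) - ((x11 : ℝ) + x10) ^ 2 / N)
        + N₁ / N₀ * ((x11 + x01) - ((x11 : ℝ) + x01) ^ 2 / N)
        + 2 * (x11 - ((x11 : ℝ) + x10) * (x11 + x01) / N) := by
  have hcells := sum_eq_card_filter_smul_of_le_one (M := ℝ) hY1 hY0
  simp only [card_filter_eq_one_eq_sum hY1, card_filter_eq_one_eq_sum hY0, Nat.cast_sum,
    varE_diffInMeans_mul hN hN₁ hN₀, hcells (fun a _ => (a : ℝ)), hcells (fun _ b => (b : ℝ)),
    hcells (fun a _ => (a : ℝ) ^ 2), hcells (fun _ b => (b : ℝ) ^ 2),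
    hcells (fun a b => (a : ℝ) * b), h11, h10, h01]
  norm_num

theorem stmt_11_general (N N₁ N₀ : ℕ) (hN₁ : 1 ≤ N₁) (hN₁' : N₁ ≤ N - 1)
    (hN₀ : N₀ = N - N₁)
    (Y1 Y0 : Fin N → ℕ) (hY1 : ∀ i, Y1 i ≤ 1) (hY0 : ∀ i, Y0 i ≤ 1)
    (N11 N10 N01 : ℕ)
    (hN11 : N11 = (Finset.univ.filter (fun i => Y1 i = 1 ∧ Y0 i = 1)).card)
    (hN10 : N10 = (Finset.univ.filter (fun i => Y1 i = 1 ∧ Y0 i = 0)).card)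
    (hN01 : N01 = (Finset.univ.filter (fun i => Y1 i = 0 ∧ Y0 i = 1)).card)
    (p1 p0 τ : ℝ) (hp1 : p1 = ((N11 : ℝ) + N10) / N) (hp0 : p0 = ((N11 : ℝ) + N01) / N)
    (hτ : τ = ((N10 : ℝ) - N01) / N)
    (hN01bound : (N01 : ℝ) ≤ N * p0 * (1 - p1))
    (n11 n01 : Finset (Fin N) → ℕ)
    (hn11 : ∀ T, n11 T = (T.filter (fun i => Y1 i = 1)).card)
    (hn01 : ∀ T, n01 T = (Tᶜ.filter (fun i => Y0 i = 1)).card) :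
    (N : ℝ) / (N - 1) *
        (((N₀ : ℝ) / N) * p1 * (1 - p1) / N₁ + ((N₁ : ℝ) / N) * p0 * (1 - p0) / N₀)
      ≤ varE N N₁ (fun T => (n11 T : ℝ) / N₁ - (n01 T : ℝ) / N₀) ∧
    varE N N₁ (fun T => (n11 T : ℝ) / N₁ - (n01 T : ℝ) / N₀)
      ≤ (N : ℝ) / (N - 1) *
          (p1 * (1 - p1) / N₁ + p0 * (1 - p0) / N₀ - τ * (1 - τ) / N) := by
  have hsum : N₁ + N₀ = N := by omega
  have hNR : (N : ℝ) = N₁ + N₀ := by exact_mod_cast hsum.symm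
  have hN₁R : (0 : ℝ) < N₁ := by exact_mod_cast hN₁
  have hN₀R : (0 : ℝ) < N₀ := by exact_mod_cast (show 0 < N₀ by omega)
  have hN : (1 : ℝ) < N := by exact_mod_cast (show 1 < N by omega)
  have hD : (0 : ℝ) < N * (N - 1) := mul_pos (by linarith) (by linarith)
  have hV := varE_diffInMeans_of_le_one hsum (by omega) (by omega) hY1 hY0
    hN11.symm hN10.symm hN01.symm
  rw [← eq_div_iff hD.ne'] at hV
  simp only [hn11, hn01, hV]
  subst hp1 hp0 hτ
  have hcov : ((N11 : ℝ) + N10) * (N11 + N01) / N ≤ N11 := by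
    have : (N : ℝ) * ((N11 + N01) / N) * (1 - (N11 + N10) / N)
        = N11 + N01 - ((N11 : ℝ) + N10) * (N11 + N01) / N := by
      field_simp
    linarith
  constructor
  · rw [← sub_nonneg]
    refine (div_nonneg (mul_nonneg zero_le_two (sub_nonneg.2 hcov)) hD.le).trans_eq ?_
    rw [hNR]
    field_simp
    ring
  · rw [← sub_nonneg]
    refine (div_nonneg (mul_nonneg zero_le_two (Nat.cast_nonneg (α := ℝ) N01)) hD.le).trans_eq ?_
    rw [hNR]
    field_simp
    ring

/-- If `0 ≤ N₀₁ ≤ N p₀ (1 − p₁)`, then the variance of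
`τ̂(T) = n₁₁(T)/N₁ − n₀₁(T)/N₀` is bounded below by
`(N/(N−1)) { (N₀/N) p₁(1−p₁)/N₁ + (N₁/N) p₀(1−p₀)/N₀ }` and above by
`(N/(N−1)) { p₁(1−p₁)/N₁ + p₀(1−p₀)/N₀ − τ(1−τ)/N }`. -/
theorem stmt_11 (N N₁ N₀ : ℕ) (hN : 2 ≤ N) (hN₁ : 1 ≤ N₁) (hN₁' : N₁ ≤ N - 1)
    (hN₀ : N₀ = N - N₁)
    (Y1 Y0 : Fin N → ℕ) (hY1 : ∀ i, Y1 i ≤ 1) (hY0 : ∀ i, Y0 i ≤ 1)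
    (N11 N10 N01 N00 : ℕ)
    (hN11 : N11 = (Finset.univ.filter (fun i => Y1 i = 1 ∧ Y0 i = 1)).card)
    (hN10 : N10 = (Finset.univ.filter (fun i => Y1 i = 1 ∧ Y0 i = 0)).card)
    (hN01 : N01 = (Finset.univ.filter (fun i => Y1 i = 0 ∧ Y0 i = 1)).card)
    (hN00 : N00 = (Finset.univ.filter (fun i => Y1 i = 0 ∧ Y0 i = 0)).card)
    (p1 p0 τ : ℝ) (hp1 : p1 = ((N11 : ℝ) + N10) / N) (hp0 : p0 = ((N11 : ℝ) + N01) / N)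
    (hτ : τ = ((N10 : ℝ) - N01) / N)
    (hN01bound : (N01 : ℝ) ≤ N * p0 * (1 - p1))
    (n11 n01 : Finset (Fin N) → ℕ)
    (hn11 : ∀ T, n11 T = (T.filter (fun i => Y1 i = 1)).card)
    (hn01 : ∀ T, n01 T = (Tᶜ.filter (fun i => Y0 i = 1)).card) :
    (N : ℝ) / (N - 1) *
        (((N₀ : ℝ) / N) * p1 * (1 - p1) / N₁ + ((N₁ : ℝ) / N) * p0 * (1 - p0) / N₀)
      ≤ varE N N₁ (fun T => (n11 T : ℝ) / N₁ - (n01 T : ℝ) / N₀) ∧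
    varE N N₁ (fun T => (n11 T : ℝ) / N₁ - (n01 T : ℝ) / N₀)
      ≤ (N : ℝ) / (N - 1) *
          (p1 * (1 - p1) / N₁ + p0 * (1 - p0) / N₀ - τ * (1 - τ) / N) :=
  stmt_11_general N N₁ N₀ hN₁ hN₁' hN₀ Y1 Y0 hY1 hY0 N11 N10 N01 hN11 hN10 hN01 p1 p0 τ hp1 hp0 hτ
    hN01bound n11 n01 hn11 hn01
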